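/- There exists a constant C > 0 depending only on d such that for every N ∈ ℕ, every M > 0 and every ε > 0, there exists a finite set G ⊆ NN(N,M) with log card(G) ≤ C N log(1 + M/ε) such that for every f ∈ NN(N,M) there is g ∈ G with sup_{x ∈ B^d} |f(x) - g(x)| ≤ ε. -/

import Mathlib

open MeasureTheory Real

noncomputable section

/-- Euclidean space ℝ^d. -/
abbrev E (d : ℕ) := EuclideanSpace ℝ (Fin d)

/-- The ReLU function σ(t) = max{t, 0}. -/
def relu (t : ℝ) : ℝ := max t 0

/-- The quantity (xᵀ,1)v : the inner product of (x,1) ∈ ℝ^{d+1} with v ∈ ℝ^{d+1}. -/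
def aff {d : ℕ} (x : E d) (v : E (d + 1)) : ℝ :=
  (∑ i : Fin d, x i * v i.castSucc) + v (Fin.last d)

/-- Parameters θ = (a_1, w_1, …, a_N, w_N) of a shallow ReLU network of width N. -/
abbrev Params (d N : ℕ) := (Fin N → ℝ) × (Fin N → E (d + 1))

/-- The network function f_θ(x) = Σ_i a_i σ((xᵀ,1) w_i). -/
def networkFn {d N : ℕ} (θ : Params d N) (x : E d) : ℝ :=
  ∑ i, θ.1 i * relu (aff x (θ.2 i))

/-- The path norm κ(θ) = Σ_i |a_i| ‖w_i‖₂. -/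
def pathNorm {d N : ℕ} (θ : Params d N) : ℝ :=
  ∑ i, |θ.1 i| * ‖θ.2 i‖

/-- The squared Euclidean norm ‖θ‖₂² of the parameter vector. -/
def paramNormSq {d N : ℕ} (θ : Params d N) : ℝ :=
  (∑ i, (θ.1 i) ^ 2) + ∑ i, ‖θ.2 i‖ ^ 2

/-- NN(N): functions on the unit ball B^d realized by a width-N shallow ReLU network. -/
def NNclass (d N : ℕ) : Set (E d → ℝ) :=
  {f | ∃ θ : Params d N, ∀ x : E d, ‖x‖ ≤ 1 → f x = networkFn θ x}

/-- NN(N, M): functions realized by a width-N network with path norm κ(θ) ≤ M. -/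
def NNclassM (d N : ℕ) (M : ℝ) : Set (E d → ℝ) :=
  {f | ∃ θ : Params d N, pathNorm θ ≤ M ∧ ∀ x : E d, ‖x‖ ≤ 1 → f x = networkFn θ x}

/-- κ(f) = inf{ Σ_j |c_j| : f(x) = Σ_j c_j σ((xᵀ,1)v_j) on B^d, v_j ∈ S^d }. -/
def kappaF {d : ℕ} (f : E d → ℝ) : ℝ :=
  sInf {s | ∃ (m : ℕ) (c : Fin m → ℝ) (v : Fin m → E (d + 1)),
    (∀ j, ‖v j‖ = 1) ∧ (∀ x : E d, ‖x‖ ≤ 1 → f x = ∑ j, c j * relu (aff x (v j))) ∧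
    s = ∑ j, |c j|}

/-- S_- = {v ∈ S^d : v_{d+1} ≤ -√2/2}. -/
def Sminus (d : ℕ) : Set (E (d + 1)) :=
  {v | ‖v‖ = 1 ∧ v (Fin.last d) ≤ -(Real.sqrt 2 / 2)}

/-- S_+ = -S_-. -/
def Splus (d : ℕ) : Set (E (d + 1)) := {v | -v ∈ Sminus d}

/-- S_0 = S^d \ (S_- ∪ S_+). -/
def Szero (d : ℕ) : Set (E (d + 1)) := {v | ‖v‖ = 1} \ (Sminus d ∪ Splus d)

/-- The variation class F_σ(M): functions f(x) = ∫_{S^d} σ((xᵀ,1)v) dμ(v) for a signed Radon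
measure μ on S^d with ‖μ‖ ≤ M (represented by its Jordan decomposition μ = μp - μn). -/
def Fsigma (d : ℕ) (M : ℝ) : Set (E d → ℝ) :=
  {f | ∃ μp μn : Measure (E (d + 1)), IsFiniteMeasure μp ∧ IsFiniteMeasure μn ∧
    μp {v | ‖v‖ = 1}ᶜ = 0 ∧ μn {v | ‖v‖ = 1}ᶜ = 0 ∧
    (μp Set.univ).toReal + (μn Set.univ).toReal ≤ M ∧
    ∀ x : E d, ‖x‖ ≤ 1 →
      f x = (∫ v, relu (aff x v) ∂μp) - ∫ v, relu (aff x v) ∂μn}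

/-- Empirical L²(μ_n) norm: ‖f‖_{L²(μ_n)} = ((1/n) Σ_i f(X_i)²)^{1/2}. -/
def empNorm {d n : ℕ} (X : Fin n → E d) (f : E d → ℝ) : ℝ :=
  Real.sqrt ((∑ i, (f (X i)) ^ 2) / n)

/-- Local complexity G_n(F; δ, ξ) = E[ sup { |(1/n) Σ_i ξ_i f(X_i)| : f ∈ F, ‖f‖_{L²(μ_n)} ≤ δ} ]. -/
def localComplexity {d n : ℕ} {Ω : Type*} [MeasurableSpace Ω] (P : Measure Ω)
    (F : Set (E d → ℝ)) (X : Fin n → E d) (δ : ℝ) (ξ : Fin n → Ω → ℝ) : ℝ :=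
  ∫ ω, sSup {r | ∃ f ∈ F, empNorm X f ≤ δ ∧ r = |(∑ i, ξ i ω * f (X i)) / n|} ∂P

/-- star(F) = {a f : f ∈ F, a ∈ [0,1]}. -/
def starHull {d : ℕ} (F : Set (E d → ℝ)) : Set (E d → ℝ) :=
  {g | ∃ f ∈ F, ∃ a : ℝ, 0 ≤ a ∧ a ≤ 1 ∧ g = fun x => a * f x}

/-- ∂F = {f₁ - f₂ : f₁, f₂ ∈ F}. -/
def diffClass {d : ℕ} (F : Set (E d → ℝ)) : Set (E d → ℝ) :=
  {g | ∃ f₁ ∈ F, ∃ f₂ ∈ F, g = f₁ - f₂}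

/-- Truncation operator T_b. -/
def truncate {d : ℕ} (b : ℝ) (f : E d → ℝ) : E d → ℝ := fun x => max (-b) (min b (f x))

/-- The Hölder ball H^α on B^d. -/
def HolderBall (d : ℕ) (α : ℝ) : Set (E d → ℝ) :=
  {h | ∃ (r : ℕ) (β : ℝ) (g : E d → ℝ), α = r + β ∧ 0 < β ∧ β ≤ 1 ∧
    (∀ x : E d, ‖x‖ ≤ 1 → g x = h x) ∧ ContDiff ℝ r g ∧
    (∀ k : ℕ, k ≤ r → ∀ x, ‖iteratedFDeriv ℝ k g x‖ ≤ 1) ∧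
    (∀ x y : E d, ‖iteratedFDeriv ℝ r g x - iteratedFDeriv ℝ r g y‖ ≤ ‖x - y‖ ^ β)}

/-! Rescaling each neuron writes every network of `NN(N, M)` as `∑ cᵢ σ((xᵀ,1)uᵢ)` with
`‖uᵢ‖ ≤ 1` and `∑ |cᵢ| ≤ M`. Rounding the `cᵢ` to `(ε/4N)ℤ` and the coordinates of the `uᵢ` to
`δℤ`, `δ = ε/(4√(d+1)M)`, both toward zero, moves the network by at most `ε` on `B^d` and does not
increase the path norm. The rounded outer coefficients are integer points of the `ℓ¹`-ball of
radius `K = ⌊4NM/ε⌋`, of which there are at most `2^N (N+K choose N) ≤ (2e(1 + 4M/ε))^N` by stars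
and bars: the `ℓ¹` constraint is what keeps `log N` out of the bound. The inner weights range over
a cube with at most `(1 + 8(d+1)M/ε)^((d+1)N)` points. For `ε < 2M` both bases are powers of
`1 + M/ε`; for `ε ≥ 2M` the zero function alone is an `ε`-net. -/

open Finset

lemma abs_relu_sub_relu_le (a b : ℝ) : |relu a - relu b| ≤ |a - b| :=
  abs_max_sub_max_le_abs a b 0

lemma abs_relu_le (a : ℝ) : |relu a| ≤ |a| := by
  simpa [relu] using abs_relu_sub_relu_le a 0

lemma relu_mul_of_nonneg {s : ℝ} (hs : 0 ≤ s) (t : ℝ) : relu (s * t) = s * relu t := by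
  simp only [relu, mul_max_of_nonneg _ _ hs, mul_zero]

namespace EuclideanSpace

variable {ι : Type*} [Fintype ι]

lemma abs_apply_le_norm (v : EuclideanSpace ℝ ι) (j : ι) : |v j| ≤ ‖v‖ :=
  PiLp.norm_apply_le v j

lemma norm_le_norm_of_abs_le {v w : EuclideanSpace ℝ ι} (h : ∀ j, |v j| ≤ |w j|) :
    ‖v‖ ≤ ‖w‖ := by
  simp only [EuclideanSpace.norm_eq, Real.norm_eq_abs]
  exact Real.sqrt_le_sqrt (sum_le_sum fun j _ => pow_le_pow_left₀ (abs_nonneg _) (h j) 2)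

lemma norm_le_sqrt_card_mul {v : EuclideanSpace ℝ ι} {c : ℝ} (hc : 0 ≤ c)
    (h : ∀ j, |v j| ≤ c) : ‖v‖ ≤ √(Fintype.card ι) * c := by
  rw [EuclideanSpace.norm_eq, ← Real.sqrt_sq hc, ← Real.sqrt_mul (Nat.cast_nonneg _)]
  refine Real.sqrt_le_sqrt ?_
  simpa using sum_le_sum fun j (_ : j ∈ univ) => pow_le_pow_left₀ (abs_nonneg _) (h j) 2

end EuclideanSpace

section Aff

variable {d : ℕ} (x : E d)

lemma aff_sub (v w : E (d + 1)) : aff x (v - w) = aff x v - aff x w := by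
  simp only [aff, PiLp.sub_apply, mul_sub, sum_sub_distrib]
  ring

lemma aff_smul (s : ℝ) (v : E (d + 1)) : aff x (s • v) = s * aff x v := by
  simp only [aff, PiLp.smul_apply, smul_eq_mul, mul_add, mul_sum]
  congr 1
  exact sum_congr rfl fun i _ => by ring

lemma abs_aff_le {x} (hx : ‖x‖ ≤ 1) (v : E (d + 1)) : |aff x v| ≤ 2 * ‖v‖ := by
  set v' : E d := WithLp.toLp 2 fun i => v i.castSucc
  have hv' : ‖v'‖ ≤ ‖v‖ := by
    simp only [EuclideanSpace.norm_eq, v']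
    refine Real.sqrt_le_sqrt ?_
    rw [Fin.sum_univ_castSucc (f := fun j => ‖v j‖ ^ 2)]
    exact le_add_of_nonneg_right (sq_nonneg _)
  have hinner : ∑ i : Fin d, x i * v i.castSucc = inner ℝ x v' := by
    simp [PiLp.inner_apply, v', mul_comm]
  calc |aff x v| ≤ |inner ℝ x v'| + |v (Fin.last d)| := by
        rw [aff, hinner]; exact abs_add_le _ _
    _ ≤ 1 * ‖v‖ + ‖v‖ := by
        gcongr
        · exact (abs_real_inner_le_norm x v').trans (mul_le_mul hx hv' (norm_nonneg _) zero_le_one)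
        · exact EuclideanSpace.abs_apply_le_norm v _
    _ = 2 * ‖v‖ := by ring

end Aff

section Network

variable {d N : ℕ}

lemma abs_networkFn_sub_le (θ θ' : Params d N) {x : E d} (hx : ‖x‖ ≤ 1) :
    |networkFn θ x - networkFn θ' x| ≤
      2 * ∑ i, (|θ.1 i - θ'.1 i| * ‖θ.2 i‖ + |θ'.1 i| * ‖θ.2 i - θ'.2 i‖) := by
  rw [networkFn, networkFn, ← sum_sub_distrib, mul_sum]
  refine (abs_sum_le_sum_abs _ _).trans (sum_le_sum fun i _ => ?_)
  have hsplit : θ.1 i * relu (aff x (θ.2 i)) - θ'.1 i * relu (aff x (θ'.2 i)) =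
      (θ.1 i - θ'.1 i) * relu (aff x (θ.2 i)) +
        θ'.1 i * (relu (aff x (θ.2 i)) - relu (aff x (θ'.2 i))) := by ring
  have hrelu : |relu (aff x (θ.2 i))| ≤ 2 * ‖θ.2 i‖ :=
    (abs_relu_le _).trans (abs_aff_le hx _)
  have hdiff : |relu (aff x (θ.2 i)) - relu (aff x (θ'.2 i))| ≤ 2 * ‖θ.2 i - θ'.2 i‖ :=
    (abs_relu_sub_relu_le _ _).trans (by rw [← aff_sub]; exact abs_aff_le hx _)
  rw [hsplit]
  refine (abs_add_le _ _).trans ?_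
  rw [abs_mul, abs_mul]
  nlinarith [abs_nonneg (θ.1 i - θ'.1 i), abs_nonneg (θ'.1 i)]

lemma abs_networkFn_le (θ : Params d N) {x : E d} (hx : ‖x‖ ≤ 1) :
    |networkFn θ x| ≤ 2 * pathNorm θ := by
  simpa [networkFn, relu, pathNorm] using abs_networkFn_sub_le θ 0 hx

lemma exists_params_normalized (θ : Params d N) :
    ∃ θ' : Params d N, (∀ i, ‖θ'.2 i‖ ≤ 1) ∧ ∑ i, |θ'.1 i| = pathNorm θ ∧
      networkFn θ' = networkFn θ := by
  refine ⟨(fun i => θ.1 i * ‖θ.2 i‖, fun i => ‖θ.2 i‖⁻¹ • θ.2 i), fun i => ?_, ?_, ?_⟩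
  · rw [norm_smul, norm_inv, norm_norm]
    exact inv_mul_le_one_of_le₀ le_rfl (norm_nonneg _)
  · simp [pathNorm, abs_mul]
  · ext x
    refine sum_congr rfl fun i _ => ?_
    rw [aff_smul, relu_mul_of_nonneg (inv_nonneg.2 (norm_nonneg _))]
    rcases eq_or_ne ‖θ.2 i‖ 0 with h | h
    · simp [norm_eq_zero.1 h, relu, aff]
    · field_simp

end Network

section Rounding

def roundTowardZero (t : ℝ) : ℤ := if 0 ≤ t then ⌊t⌋ else ⌈t⌉

lemma abs_roundTowardZero_le (t : ℝ) : |(roundTowardZero t : ℝ)| ≤ |t| := by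
  unfold roundTowardZero
  split_ifs with h
  · have : (0 : ℝ) ≤ ⌊t⌋ := by exact_mod_cast Int.floor_nonneg.2 h
    rw [abs_of_nonneg h, abs_of_nonneg this]
    exact Int.floor_le t
  · have : (⌈t⌉ : ℝ) ≤ 0 := by exact_mod_cast Int.ceil_le.2 (by push_cast; linarith)
    rw [abs_of_neg (not_le.1 h), abs_of_nonpos this, neg_le_neg_iff]
    exact Int.le_ceil t

lemma abs_sub_roundTowardZero_le (t : ℝ) : |t - roundTowardZero t| ≤ 1 := by
  unfold roundTowardZero
  rw [abs_le]
  split_ifs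
  · constructor <;> linarith [Int.floor_le t, Int.sub_one_lt_floor t]
  · constructor <;> linarith [Int.le_ceil t, Int.ceil_lt_add_one t]

variable {δ : ℝ}

lemma abs_mul_roundTowardZero_div_le (hδ : 0 < δ) (t : ℝ) :
    |δ * roundTowardZero (t / δ)| ≤ |t| :=
  calc |δ * roundTowardZero (t / δ)| ≤ δ * |t / δ| := by
        rw [abs_mul, abs_of_pos hδ]
        exact mul_le_mul_of_nonneg_left (abs_roundTowardZero_le _) hδ.le
    _ = |t| := by rw [abs_div, abs_of_pos hδ, mul_div_cancel₀ _ hδ.ne']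

lemma abs_sub_mul_roundTowardZero_div_le (hδ : 0 < δ) (t : ℝ) :
    |t - δ * roundTowardZero (t / δ)| ≤ δ :=
  calc |t - δ * roundTowardZero (t / δ)| = |δ * (t / δ - roundTowardZero (t / δ))| := by
        rw [mul_sub, mul_div_cancel₀ _ hδ.ne']
    _ = δ * |t / δ - roundTowardZero (t / δ)| := by rw [abs_mul, abs_of_pos hδ]
    _ ≤ δ * 1 := by gcongr; exact abs_sub_roundTowardZero_le _
    _ = δ := mul_one δ

lemma natAbs_le_floor_of_abs_le {k : ℤ} {a : ℝ} (h : |(k : ℝ)| ≤ a) : k.natAbs ≤ ⌊a⌋₊ :=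
  Nat.le_floor (by rwa [Nat.cast_natAbs, Int.cast_abs])

end Rounding

section Quantize

variable {d N : ℕ}

def gridIndex (δc δu : ℝ) (θ : Params d N) : (Fin N → ℤ) × (Fin N → Fin (d + 1) → ℤ) :=
  (fun i => roundTowardZero (θ.1 i / δc), fun i j => roundTowardZero (θ.2 i j / δu))

def gridParams (δc δu : ℝ) (p : (Fin N → ℤ) × (Fin N → Fin (d + 1) → ℤ)) : Params d N :=
  (fun i => δc * p.1 i, fun i => WithLp.toLp 2 fun j => δu * p.2 i j)

def quantize (δc δu : ℝ) (θ : Params d N) : Params d N := gridParams δc δu (gridIndex δc δu θ)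

variable {δc δu : ℝ} (θ : Params d N) (i : Fin N)

lemma abs_quantize_fst_le (hδc : 0 < δc) : |(quantize δc δu θ).1 i| ≤ |θ.1 i| :=
  abs_mul_roundTowardZero_div_le hδc _

lemma abs_sub_quantize_fst_le (hδc : 0 < δc) : |θ.1 i - (quantize δc δu θ).1 i| ≤ δc :=
  abs_sub_mul_roundTowardZero_div_le hδc _

lemma norm_quantize_snd_le (hδu : 0 < δu) : ‖(quantize δc δu θ).2 i‖ ≤ ‖θ.2 i‖ :=
  EuclideanSpace.norm_le_norm_of_abs_le fun _ => abs_mul_roundTowardZero_div_le hδu _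

lemma norm_sub_quantize_snd_le (hδu : 0 < δu) :
    ‖θ.2 i - (quantize δc δu θ).2 i‖ ≤ √(d + 1 : ℕ) * δu := by
  simpa using EuclideanSpace.norm_le_sqrt_card_mul hδu.le
    fun j => abs_sub_mul_roundTowardZero_div_le hδu (θ.2 i j)

lemma pathNorm_quantize_le (hδc : 0 < δc) (hδu : 0 < δu) :
    pathNorm (quantize δc δu θ) ≤ pathNorm θ :=
  sum_le_sum fun i _ => mul_le_mul (abs_quantize_fst_le θ i hδc) (norm_quantize_snd_le θ i hδu)
    (norm_nonneg _) (abs_nonneg _)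

lemma sum_natAbs_gridIndex_fst_le (hδc : 0 < δc) :
    ∑ i, ((gridIndex δc δu θ).1 i).natAbs ≤ ⌊(∑ i, |θ.1 i|) / δc⌋₊ := by
  refine Nat.le_floor ?_
  push_cast [Nat.cast_natAbs, Int.cast_abs]
  rw [le_div_iff₀ hδc, sum_mul]
  refine sum_le_sum fun i _ => ?_
  simpa [gridIndex, abs_mul, abs_of_pos hδc, mul_comm] using abs_mul_roundTowardZero_div_le hδc (θ.1 i)

lemma natAbs_gridIndex_snd_le (hδu : 0 < δu) (j : Fin (d + 1)) :
    ((gridIndex δc δu θ).2 i j).natAbs ≤ ⌊‖θ.2 i‖ / δu⌋₊ := by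
  refine natAbs_le_floor_of_abs_le ?_
  rw [le_div_iff₀ hδu]
  have := (abs_mul_roundTowardZero_div_le hδu (θ.2 i j)).trans
    (EuclideanSpace.abs_apply_le_norm _ _)
  simpa [gridIndex, abs_mul, abs_of_pos hδu, mul_comm] using this

end Quantize

lemma card_antidiagonalTuple (k n : ℕ) :
    #(Nat.antidiagonalTuple (k + 1) n) = (k + n).choose k := by
  rw [← piAntidiag_univ_fin_eq_antidiagonalTuple, ← map_sym_eq_piAntidiag, card_map, sym_univ,
    card_univ, Sym.card_sym_eq_choose, Fintype.card_fin, add_right_comm, Nat.add_sub_cancel,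
    Nat.choose_symm_add]

/-- A point `z` is recovered from its signs and from `(|z 0|, …, |z (N-1)|, K - ∑ |z i|)`,
a point of `Nat.antidiagonalTuple (N + 1) K`. -/
lemma exists_finset_sum_natAbs_le_choose (N K : ℕ) :
    ∃ T : Finset (Fin N → ℤ), #T ≤ 2 ^ N * (N + K).choose N ∧
      ∀ z : Fin N → ℤ, ∑ i, (z i).natAbs ≤ K → z ∈ T := by
  classical
  refine ⟨(univ ×ˢ Nat.antidiagonalTuple (N + 1) K).image
    fun (p : (Fin N → Bool) × (Fin (N + 1) → ℕ)) i =>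
      (if p.1 i then -1 else 1) * (p.2 i.castSucc : ℤ), ?_, fun z hz => ?_⟩
  · refine card_image_le.trans ?_
    rw [card_product, card_univ, Fintype.card_fun, Fintype.card_bool, Fintype.card_fin,
      card_antidiagonalTuple]
  · refine mem_image.2 ⟨(fun i => decide (z i < 0),
      Fin.snoc (fun i => (z i).natAbs) (K - ∑ i, (z i).natAbs)), ?_, funext fun i => ?_⟩
    · simp [Nat.mem_antidiagonalTuple, Fin.sum_univ_castSucc, hz]
    · simp only [Fin.snoc_castSucc]
      split_ifs with h <;> simp at h <;> omega

lemma choose_add_le_exp_mul_pow (N K : ℕ) :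
    ((N + K).choose N : ℝ) ≤ (exp 1 * (1 + K / N)) ^ N := by
  rcases N.eq_zero_or_pos with rfl | hN
  · simp
  have hN' : (0 : ℝ) < N := Nat.cast_pos.2 hN
  calc ((N + K).choose N : ℝ) ≤ ((N + K : ℕ) : ℝ) ^ N / N.factorial := Nat.choose_le_pow_div _ _
    _ = (1 + K / N) ^ N * ((N : ℝ) ^ N / N.factorial) := by
        rw [← mul_div_assoc, ← mul_pow, add_mul, one_mul, div_mul_cancel₀ _ hN'.ne']
        push_cast
        ring
    _ ≤ (1 + K / N) ^ N * exp N := by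
        gcongr
        exact Real.pow_div_factorial_le_exp _ hN'.le N
    _ = (exp 1 * (1 + K / N)) ^ N := by rw [mul_pow, Real.exp_one_pow, mul_comm]

lemma exists_finset_sum_natAbs_le (N K : ℕ) :
    ∃ T : Finset (Fin N → ℤ), (#T : ℝ) ≤ (2 * exp 1 * (1 + K / N)) ^ N ∧
      ∀ z : Fin N → ℤ, ∑ i, (z i).natAbs ≤ K → z ∈ T := by
  obtain ⟨T, hT, hmem⟩ := exists_finset_sum_natAbs_le_choose N K
  refine ⟨T, ?_, hmem⟩
  calc (#T : ℝ) ≤ 2 ^ N * (N + K).choose N := by exact_mod_cast hT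
    _ ≤ 2 ^ N * (exp 1 * (1 + K / N)) ^ N := by gcongr; exact choose_add_le_exp_mul_pow N K
    _ = (2 * exp 1 * (1 + K / N)) ^ N := by rw [← mul_pow, mul_assoc]

lemma two_mul_exp_one_mul_le_pow {t : ℝ} (ht : 1 / 2 ≤ t) :
    2 * exp 1 * (1 + 4 * t) ≤ (1 + t) ^ 9 := by
  have he : exp 1 ≤ 3 := by linarith [Real.exp_one_lt_d9]
  have hpow : (24 : ℝ) ≤ (1 + t) ^ 8 :=
    le_trans (by norm_num) (pow_le_pow_left₀ (by norm_num) (by linarith : (3 / 2 : ℝ) ≤ 1 + t) 8)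
  calc 2 * exp 1 * (1 + 4 * t) ≤ 24 * (1 + t) := by nlinarith [Real.exp_pos 1]
    _ ≤ (1 + t) ^ 8 * (1 + t) := by gcongr
    _ = (1 + t) ^ 9 := (pow_succ _ 8).symm

lemma two_mul_add_one_le_pow {K n : ℕ} {t : ℝ} (ht : 0 ≤ t) (hK : (K : ℝ) ≤ n * t) :
    (2 * K + 1 : ℝ) ≤ (1 + t) ^ (2 * n) := by
  have := one_add_mul_le_pow (by linarith : (-2 : ℝ) ≤ t) (2 * n)
  push_cast at this
  linarith

def normalizedParams (d N : ℕ) (M : ℝ) : Set (Params d N) :=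
  {θ | (∀ i, ‖θ.2 i‖ ≤ 1) ∧ ∑ i, |θ.1 i| ≤ M}

section Cover

variable {d N : ℕ} {M ε δc δu : ℝ}

lemma abs_networkFn_sub_quantize_le (hδc : 0 < δc) (hδu : 0 < δu) {θ : Params d N}
    (hθ : θ ∈ normalizedParams d N M) {x : E d} (hx : ‖x‖ ≤ 1) :
    |networkFn θ x - networkFn (quantize δc δu θ) x| ≤
      2 * (N * δc + M * (√(d + 1 : ℕ) * δu)) := by
  refine (abs_networkFn_sub_le _ _ hx).trans ?_
  gcongr
  rw [sum_add_distrib]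
  gcongr
  · calc ∑ i, |θ.1 i - (quantize δc δu θ).1 i| * ‖θ.2 i‖ ≤ ∑ _i : Fin N, δc * 1 := by
          gcongr with i
          · exact abs_sub_quantize_fst_le θ i hδc
          · exact hθ.1 i
      _ = N * δc := by simp
  · calc ∑ i, |(quantize δc δu θ).1 i| * ‖θ.2 i - (quantize δc δu θ).2 i‖
          ≤ ∑ i, |θ.1 i| * (√(d + 1 : ℕ) * δu) :=
          sum_le_sum fun i _ => mul_le_mul (abs_quantize_fst_le θ i hδc)
            (norm_sub_quantize_snd_le θ i hδu) (norm_nonneg _) (abs_nonneg _)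
      _ ≤ M * (√(d + 1 : ℕ) * δu) := by rw [← sum_mul]; gcongr; exact hθ.2

lemma exists_finset_image_gridIndex_subset (hδc : 0 < δc) (hδu : 0 < δu) :
    ∃ T : Finset ((Fin N → ℤ) × (Fin N → Fin (d + 1) → ℤ)),
      gridIndex δc δu '' normalizedParams d N M ⊆ T ∧
      (#T : ℝ) ≤ (2 * exp 1 * (1 + ⌊M / δc⌋₊ / N)) ^ N *
        (2 * ⌊1 / δu⌋₊ + 1) ^ ((d + 1) * N) := by
  obtain ⟨L, hL, hmemL⟩ := exists_finset_sum_natAbs_le N ⌊M / δc⌋₊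
  set K := ⌊1 / δu⌋₊
  refine ⟨L ×ˢ Fintype.piFinset fun _ => Fintype.piFinset fun _ => Icc (-(K : ℤ)) K, ?_, ?_⟩
  · rintro _ ⟨θ, hθ, rfl⟩
    refine mem_product.2 ⟨hmemL _ ?_, Fintype.mem_piFinset.2 fun i =>
      Fintype.mem_piFinset.2 fun j => mem_Icc.2 ?_⟩
    · exact (sum_natAbs_gridIndex_fst_le θ hδc).trans (Nat.floor_le_floor (by gcongr; exact hθ.2))
    · have := (natAbs_gridIndex_snd_le (δc := δc) θ i hδu j).trans
        (Nat.floor_le_floor (by gcongr; exact hθ.1 i) : _ ≤ K)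
      omega
  · have hIcc : #(Icc (-(K : ℤ)) K) = 2 * K + 1 := by rw [Int.card_Icc]; omega
    rw [card_product, Nat.cast_mul]
    gcongr
    simp [Fintype.card_piFinset, hIcc, ← pow_mul, mul_comm]

lemma exists_cover_of_quantize (hδc : 0 < δc) (hδu : 0 < δu) :
    ∃ G ⊆ NNclassM d N M, G.Finite ∧
      (Nat.card G : ℝ) ≤ (2 * exp 1 * (1 + ⌊M / δc⌋₊ / N)) ^ N *
        (2 * ⌊1 / δu⌋₊ + 1) ^ ((d + 1) * N) ∧
      ∀ f ∈ NNclassM d N M, ∃ g ∈ G, ∀ x : E d, ‖x‖ ≤ 1 →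
        |f x - g x| ≤ 2 * (N * δc + M * (√(d + 1 : ℕ) * δu)) := by
  obtain ⟨T, hT, hcard⟩ := exists_finset_image_gridIndex_subset (d := d) (N := N) (M := M) hδc hδu
  have hsub : (networkFn ∘ quantize δc δu) '' normalizedParams d N M ⊆
      (networkFn ∘ gridParams (d := d) (N := N) δc δu) '' T := by
    rw [show networkFn ∘ quantize δc δu = (networkFn ∘ gridParams δc δu) ∘ gridIndex δc δu from
      rfl, Set.image_comp]
    exact Set.image_mono hT
  have hfin : ((networkFn ∘ gridParams (d := d) (N := N) δc δu) '' T).Finite :=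
    T.finite_toSet.image _
  refine ⟨_, ?_, hfin.subset hsub, ?_, ?_⟩
  · rintro _ ⟨θ, hθ, rfl⟩
    refine ⟨quantize δc δu θ, (pathNorm_quantize_le θ hδc hδu).trans ?_, fun _ _ => rfl⟩
    exact (sum_le_sum fun i _ => mul_le_of_le_one_right (abs_nonneg _) (hθ.1 i)).trans hθ.2
  · rw [Nat.card_coe_set_eq]
    calc (Set.ncard _ : ℝ) ≤ #T := by
          exact_mod_cast (Set.ncard_le_ncard hsub hfin).trans
            ((Set.ncard_image_le T.finite_toSet).trans (Set.ncard_coe_finset T).le)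
      _ ≤ _ := hcard
  · rintro f ⟨θ, hθM, hf⟩
    obtain ⟨θ', hθ'1, hθ'2, hθ'θ⟩ := exists_params_normalized θ
    refine ⟨_, ⟨θ', ⟨hθ'1, hθ'2.trans_le hθM⟩, rfl⟩, fun x hx => ?_⟩
    rw [hf x hx, ← hθ'θ]
    exact abs_networkFn_sub_quantize_le hδc hδu ⟨hθ'1, hθ'2.trans_le hθM⟩ hx

lemma exists_cover_card_le_pow_of_two_mul_le (k : ℕ) (hM : 0 ≤ M) (hMε : 2 * M ≤ ε) :
    ∃ G ⊆ NNclassM d N M, G.Finite ∧ (Nat.card G : ℝ) ≤ (1 + M / ε) ^ k ∧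
      ∀ f ∈ NNclassM d N M, ∃ g ∈ G, ∀ x : E d, ‖x‖ ≤ 1 → |f x - g x| ≤ ε := by
  refine ⟨{0}, ?_, Set.finite_singleton _, ?_, ?_⟩
  · rintro _ rfl
    exact ⟨0, by simpa [pathNorm] using hM, fun x _ => by simp [networkFn, relu]⟩
  · rw [Nat.card_unique, Nat.cast_one]
    exact one_le_pow₀ (le_add_of_nonneg_right (div_nonneg hM (by linarith)))
  · rintro f ⟨θ, hθM, hf⟩
    refine ⟨0, rfl, fun x hx => ?_⟩
    rw [hf x hx, Pi.zero_apply, sub_zero]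
    linarith [abs_networkFn_le θ hx]

lemma exists_cover_card_le_pow_of_lt_two_mul (hN : 1 ≤ N) (hM : 0 < M) (hε : 0 < ε)
    (hεM : ε < 2 * M) :
    ∃ G ⊆ NNclassM d N M, G.Finite ∧
      (Nat.card G : ℝ) ≤ (1 + M / ε) ^ ((9 + 8 * (d + 1) ^ 2) * N) ∧
      ∀ f ∈ NNclassM d N M, ∃ g ∈ G, ∀ x : E d, ‖x‖ ≤ 1 → |f x - g x| ≤ ε := by
  have hN' : (0 : ℝ) < N := by exact_mod_cast hN
  have hd : √(d + 1 : ℕ) ≤ ((d + 1 : ℕ) : ℝ) := Real.sqrt_le_self_iff.2 (Or.inr (by simp))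
  set t := M / ε with ht_def
  have ht : 1 / 2 ≤ t := by rw [le_div_iff₀ hε]; linarith
  obtain ⟨G, hGsub, hGfin, hGcard, hGcover⟩ := exists_cover_of_quantize (d := d) (N := N)
    (M := M) (δc := ε / (4 * N)) (δu := ε / (4 * √(d + 1 : ℕ) * M)) (by positivity)
    (by positivity)
  refine ⟨G, hGsub, hGfin, hGcard.trans ?_, fun f hf => ?_⟩
  · have hc : (⌊M / (ε / (4 * N))⌋₊ : ℝ) / N ≤ 4 * t := by
      rw [div_le_iff₀ hN']
      refine (Nat.floor_le (by positivity)).trans_eq ?_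
      rw [ht_def]
      field_simp
    have hu : (⌊1 / (ε / (4 * √(d + 1 : ℕ) * M))⌋₊ : ℝ) ≤ ((4 * (d + 1) : ℕ) : ℝ) * t := by
      refine (Nat.floor_le (by positivity)).trans ?_
      rw [one_div_div, ht_def, mul_div_assoc, Nat.cast_mul]
      gcongr
      norm_num
    calc _ ≤ ((1 + t) ^ 9) ^ N * ((1 + t) ^ (2 * (4 * (d + 1)))) ^ ((d + 1) * N) := by
          gcongr
          · exact le_trans (by gcongr) (two_mul_exp_one_mul_le_pow ht)
          · exact two_mul_add_one_le_pow (by linarith) hu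
      _ = (1 + t) ^ ((9 + 8 * (d + 1) ^ 2) * N) := by
          rw [← pow_mul, ← pow_mul, ← pow_add]; ring_nf
  · obtain ⟨g, hg, hfg⟩ := hGcover f hf
    refine ⟨g, hg, fun x hx => (hfg x hx).trans_eq ?_⟩
    field_simp
    ring

end Cover

theorem statement15_general (d : ℕ) :
    ∃ C : ℝ, 0 < C ∧
      ∀ (N : ℕ) (M ε : ℝ), 1 ≤ N → 0 < M → 0 < ε →
        ∃ G : Set (E d → ℝ), G ⊆ NNclassM d N M ∧ G.Finite ∧
          Real.log (Nat.card G) ≤ C * N * Real.log (1 + M / ε) ∧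
          ∀ f ∈ NNclassM d N M, ∃ g ∈ G, ∀ x : E d, ‖x‖ ≤ 1 → |f x - g x| ≤ ε := by
  refine ⟨9 + 8 * (d + 1) ^ 2, by positivity, fun N M ε hN hM hε => ?_⟩
  obtain ⟨G, hGsub, hGfin, hGcard, hGcover⟩ := (le_or_gt (2 * M) ε).elim
    (exists_cover_card_le_pow_of_two_mul_le _ hM.le)
    (exists_cover_card_le_pow_of_lt_two_mul hN hM hε)
  refine ⟨G, hGsub, hGfin, ?_, hGcover⟩
  have hlog : 0 ≤ Real.log (1 + M / ε) := Real.log_nonneg (by have := div_pos hM hε; linarith)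
  rcases (Nat.card G).eq_zero_or_pos with h | h
  · rw [h, Nat.cast_zero, Real.log_zero]
    positivity
  · calc Real.log (Nat.card G) ≤ Real.log ((1 + M / ε) ^ ((9 + 8 * (d + 1) ^ 2) * N)) :=
          Real.log_le_log (by exact_mod_cast h) hGcard
      _ = (9 + 8 * (d + 1) ^ 2) * N * Real.log (1 + M / ε) := by
          rw [Real.log_pow]; push_cast; ring

/-- covering numbers of NN(N, M) in the uniform norm on B^d. -/
theorem statement15 (d : ℕ) (hd : 1 ≤ d) :
    ∃ C : ℝ, 0 < C ∧
      ∀ (N : ℕ) (M ε : ℝ), 1 ≤ N → 0 < M → 0 < ε →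
        ∃ G : Set (E d → ℝ), G ⊆ NNclassM d N M ∧ G.Finite ∧
          Real.log (Nat.card G) ≤ C * N * Real.log (1 + M / ε) ∧
          ∀ f ∈ NNclassM d N M, ∃ g ∈ G, ∀ x : E d, ‖x‖ ≤ 1 → |f x - g x| ≤ ε :=
  statement15_general d
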